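/- arXiv:1901.07275 — 2 statements merged into one kernel-verified Lean document; each statement's English description precedes it below -/
import Mathlib

section
/- Let a, b, ν be real numbers and define q : (0, π) → ℝ by q(t) = (ν + (a+b+1)/2)² + (1/4 - a²)/(4 sin²(t/2)) + (1/4 - b²)/(4 cos²(t/2)). Suppose Y : ℝ → ℝ is twice differentiable on (-1, 1) and satisfies Jacobi's differential equation (1 - x²) Y''(x) + (b - a - (a+b+2)x) Y'(x) + ν(ν + a + b + 1) Y(x) = 0 for all x ∈ (-1, 1). Define y : (0, π) → ℝ by y(t) = Y(cos t) · (sin(t/2))^{a + 1/2} · (cos(t/2))^{b + 1/2}. Then y is twice differentiable on (0, π) and y''(t) + q(t) y(t) = 0 for all t ∈ (0, π). -/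
/-!
Write `y = u w` with `u(t) = Y(cos t)` and `w(t) = sin(t/2)^α cos(t/2)^β`, `α = a + 1/2`,
`β = b + 1/2`. If `h = w'/w` then `(u w)'' = (u'' + 2 h u' + (h' + h²) u) w`. For this `w`,
`sin t · h(t) = (α - β)/2 + (α + β)/2 · cos t`, so `u'' + 2 h u'` is exactly the derivative part of
Jacobi's operator at `x = cos t`, while `h' + h² + q = ν(ν + a + b + 1)` is its constant term.
-/

open Real Set

section LogDeriv

variable {𝕜 : Type*} [NontriviallyNormedField 𝕜] {u w h : 𝕜 → 𝕜} {t u' V : 𝕜}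

theorem HasDerivAt.mul_of_logDeriv (hu : HasDerivAt u u' t) (hw : HasDerivAt w (w t * h t) t) :
    HasDerivAt (fun s => u s * w s) ((u' + u t * h t) * w t) t :=
  (hu.mul hw).congr_deriv (by ring)

theorem HasDerivAt.deriv_mul_of_logDeriv {u' : 𝕜 → 𝕜} {u'' : 𝕜} (hu' : HasDerivAt u' u'' t)
    (hu : HasDerivAt u (u' t) t) (hw : HasDerivAt w (w t * h t) t)
    (hh : HasDerivAt h (V - h t ^ 2) t) :
    HasDerivAt (fun s => (u' s + u s * h s) * w s)
      ((u'' + 2 * u' t * h t + V * u t) * w t) t :=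
  ((hu'.add (hu.mul hh)).mul_of_logDeriv (u := fun s => u' s + u s * h s) hw).congr_deriv
    (by ring)

end LogDeriv

theorem hasDerivAt_comp_cos {f : ℝ → ℝ} {f' t : ℝ} (hf : HasDerivAt f f' (cos t)) :
    HasDerivAt (fun s => f (cos s)) (-sin t * f') t :=
  (hf.comp t (hasDerivAt_cos t)).congr_deriv (mul_comm _ _)

noncomputable def halfAngleWeight (α β t : ℝ) : ℝ :=
  sin (t / 2) ^ α * cos (t / 2) ^ β

noncomputable def halfAngleWeightLogDeriv (α β t : ℝ) : ℝ :=
  α * cos (t / 2) / (2 * sin (t / 2)) - β * sin (t / 2) / (2 * cos (t / 2))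

noncomputable def halfAngleWeightSecondDerivRatio (α β t : ℝ) : ℝ :=
  (α ^ 2 - α) / (4 * sin (t / 2) ^ 2) + (β ^ 2 - β) / (4 * cos (t / 2) ^ 2) - ((α + β) / 2) ^ 2

section HalfAngle

variable {α β t : ℝ}

theorem hasDerivAt_halfAngleWeight (hs : sin (t / 2) ≠ 0) (hc : cos (t / 2) ≠ 0) :
    HasDerivAt (halfAngleWeight α β)
      (halfAngleWeight α β t * halfAngleWeightLogDeriv α β t) t := by
  have hhalf : HasDerivAt (fun s : ℝ => s / 2) (1 / 2) t := (hasDerivAt_id t).div_const 2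
  have hsα := hhalf.sin.rpow_const (p := α) (Or.inl hs)
  have hcβ := hhalf.cos.rpow_const (p := β) (Or.inl hc)
  refine (hsα.mul hcβ).congr_deriv ?_
  rw [rpow_sub_one hs, rpow_sub_one hc, halfAngleWeight, halfAngleWeightLogDeriv]
  field_simp
  ring

theorem hasDerivAt_halfAngleWeightLogDeriv (hs : sin (t / 2) ≠ 0) (hc : cos (t / 2) ≠ 0) :
    HasDerivAt (halfAngleWeightLogDeriv α β)
      (halfAngleWeightSecondDerivRatio α β t - halfAngleWeightLogDeriv α β t ^ 2) t := by
  have hhalf : HasDerivAt (fun s : ℝ => s / 2) (1 / 2) t := (hasDerivAt_id t).div_const 2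
  refine (((hhalf.cos.const_mul α).div (hhalf.sin.const_mul 2) (by simpa using hs)).sub
    ((hhalf.sin.const_mul β).div (hhalf.cos.const_mul 2) (by simpa using hc))).congr_deriv ?_
  rw [halfAngleWeightSecondDerivRatio, halfAngleWeightLogDeriv]
  field_simp
  linear_combination 4 * ((α ^ 2 - α) * cos (t / 2) ^ 2 + (β ^ 2 - β) * sin (t / 2) ^ 2)
    * sin_sq_add_cos_sq (t / 2)

theorem sin_mul_halfAngleWeightLogDeriv (hs : sin (t / 2) ≠ 0) (hc : cos (t / 2) ≠ 0) :
    sin t * halfAngleWeightLogDeriv α β t = (α - β) / 2 + (α + β) / 2 * cos t := by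
  have hsin : sin t = 2 * sin (t / 2) * cos (t / 2) := by
    rw [← sin_two_mul, mul_div_cancel₀ t two_ne_zero]
  have hcos : cos t = 2 * cos (t / 2) ^ 2 - 1 := by
    rw [← cos_two_mul, mul_div_cancel₀ t two_ne_zero]
  rw [hsin, hcos, halfAngleWeightLogDeriv]
  field_simp
  linear_combination (-2 * β) * sin_sq_add_cos_sq (t / 2)

end HalfAngle

/-- The Liouville-normal-form trigonometric transformation of Jacobi's
differential equation: if `Y` is twice differentiable on `(-1, 1)` and satisfies
`(1 - x²) Y'' + (b - a - (a+b+2)x) Y' + ν(ν+a+b+1) Y = 0` there, then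
`y(t) = Y(cos t) (sin(t/2))^{a+1/2} (cos(t/2))^{b+1/2}` is twice differentiable
on `(0, π)` and satisfies `y'' + q y = 0`, where
`q(t) = (ν + (a+b+1)/2)² + (1/4 - a²)/(4 sin²(t/2)) + (1/4 - b²)/(4 cos²(t/2))`. -/
theorem jacobi_ode_trig_normal_form
    (a b ν : ℝ) (Y Y' Y'' : ℝ → ℝ)
    (hY : ∀ x ∈ Set.Ioo (-1 : ℝ) 1, HasDerivAt Y (Y' x) x)
    (hY' : ∀ x ∈ Set.Ioo (-1 : ℝ) 1, HasDerivAt Y' (Y'' x) x)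
    (hode : ∀ x ∈ Set.Ioo (-1 : ℝ) 1,
      (1 - x ^ 2) * Y'' x + (b - a - (a + b + 2) * x) * Y' x
        + ν * (ν + a + b + 1) * Y x = 0) :
    ∃ y' y'' : ℝ → ℝ, ∀ t ∈ Set.Ioo (0 : ℝ) Real.pi,
      HasDerivAt
        (fun s => Y (Real.cos s) * Real.sin (s / 2) ^ (a + 1 / 2) *
          Real.cos (s / 2) ^ (b + 1 / 2)) (y' t) t ∧
      HasDerivAt y' (y'' t) t ∧
      y'' t +
        ((ν + (a + b + 1) / 2) ^ 2
          + (1 / 4 - a ^ 2) / (4 * Real.sin (t / 2) ^ 2)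
          + (1 / 4 - b ^ 2) / (4 * Real.cos (t / 2) ^ 2)) *
        (Y (Real.cos t) * Real.sin (t / 2) ^ (a + 1 / 2) *
          Real.cos (t / 2) ^ (b + 1 / 2)) = 0 := by
  set w := halfAngleWeight (a + 1 / 2) (b + 1 / 2)
  set h := halfAngleWeightLogDeriv (a + 1 / 2) (b + 1 / 2)
  set V := halfAngleWeightSecondDerivRatio (a + 1 / 2) (b + 1 / 2)
  have hy : (fun s => Y (cos s) * sin (s / 2) ^ (a + 1 / 2) * cos (s / 2) ^ (b + 1 / 2))
      = fun s => Y (cos s) * w s := by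
    simp only [w, halfAngleWeight, mul_assoc]
  refine ⟨fun s => (-sin s * Y' (cos s) + Y (cos s) * h s) * w s,
    fun s => (-cos s * Y' (cos s) + -sin s * (-sin s * Y'' (cos s))
      + 2 * (-sin s * Y' (cos s)) * h s + V s * Y (cos s)) * w s, fun t ⟨ht0, htπ⟩ => ?_⟩
  have hs : sin (t / 2) ≠ 0 := (sin_pos_of_pos_of_lt_pi (by linarith) (by linarith)).ne'
  have hc : cos (t / 2) ≠ 0 := (cos_pos_of_mem_Ioo ⟨by linarith, by linarith⟩).ne'
  have hx : cos t ∈ Ioo (-1 : ℝ) 1 := by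
    constructor
    · simpa using cos_lt_cos_of_nonneg_of_le_pi ht0.le le_rfl htπ
    · simpa using cos_lt_cos_of_nonneg_of_le_pi le_rfl htπ.le ht0
  have hu := hasDerivAt_comp_cos (hY _ hx)
  have hu' := (hasDerivAt_sin t).neg.mul (hasDerivAt_comp_cos (hY' _ hx))
  have hw := hasDerivAt_halfAngleWeight (α := a + 1 / 2) (β := b + 1 / 2) hs hc
  have hh := hasDerivAt_halfAngleWeightLogDeriv (α := a + 1 / 2) (β := b + 1 / 2) hs hc
  rw [hy]
  refine ⟨hu.mul_of_logDeriv hw, hu'.deriv_mul_of_logDeriv hu hw hh, ?_⟩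
  have hsh := sin_mul_halfAngleWeightLogDeriv (α := a + 1 / 2) (β := b + 1 / 2) hs hc
  simp only [w, V, halfAngleWeight, halfAngleWeightSecondDerivRatio]
  linear_combination sin (t / 2) ^ (a + 1 / 2) * cos (t / 2) ^ (b + 1 / 2) *
    (hode _ hx - 2 * Y' (cos t) * hsh + Y'' (cos t) * sin_sq_add_cos_sq t)
end

section
/- Let R be a commutative ring, let n and m be finite index types, let F be an n × m matrix over R, let r ∈ ℕ, and let u_1,…,u_r ∈ Rⁿ, v_1,…,v_r ∈ Rᵐ. Then for every vector f ∈ Rⁿ, ((Σ_{j=1}^{r} u_j v_jᵀ) ⊗ F)ᵀ · f = Σ_{j=1}^{r} diag(v_j) · (Fᵀ · (diag(u_j) · f)), where · denotes matrix-vector multiplication and ᵀ denotes transpose. -/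
open Matrix

/-- Transposed fast-transform identity: for every vector `f`,
`((Σ_j u_j v_jᵀ) ⊗ F)ᵀ f = Σ_j diag(v_j) (Fᵀ (diag(u_j) f))`. -/
theorem hadamard_lowRank_transpose_mulVec
    (R : Type*) [CommRing R] (n m : Type*) [Fintype n] [Fintype m]
    [DecidableEq n] [DecidableEq m]
    (F : Matrix n m R) (r : ℕ) (u : Fin r → n → R) (v : Fin r → m → R)
    (f : n → R) :
    (Matrix.hadamard (∑ j, Matrix.vecMulVec (u j) (v j)) F)ᵀ.mulVec f
      = ∑ j, (Matrix.diagonal (v j)).mulVec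
          (Fᵀ.mulVec ((Matrix.diagonal (u j)).mulVec f)) := by
  have h : ∀ j, (Matrix.diagonal (v j)).mulVec
          (Fᵀ.mulVec ((Matrix.diagonal (u j)).mulVec f))
      = fun k => ∑ i, u j i * v j k * F i k * f i := by
    intro j
    funext k
    simp only [mulVec_diagonal]
    simp only [mulVec, dotProduct, transpose_apply, Finset.mul_sum]
    apply Finset.sum_congr rfl
    intro i _
    simp only [Matrix.diagonal_apply, mul_ite, mul_zero, ite_mul, zero_mul,
      Finset.sum_ite_eq, Finset.mem_univ, if_true]
    ring
  simp only [h]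
  funext k
  simp only [mulVec, dotProduct, transpose_apply, hadamard_apply, vecMulVec_apply,
    Matrix.sum_apply, Finset.sum_apply, Finset.sum_mul]
  rw [Finset.sum_comm]
end
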